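/- Let A be a Banach algebra and σ : A → A a continuous algebra homomorphism with dense range. If A has a σ-approximate diagonal, then A has an approximate diagonal, i.e., a bounded net (m_α) in A ⊗̂ A such that a·m_α − m_α·a → 0 and a·π(m_α) → a in norm for every a ∈ A. -/

import Mathlib

/-!
The given net is itself an approximate diagonal. For a bounded net `m`, the maps
`a ↦ a·m_i − m_i·a` and `a ↦ a·π(m_i)` form equicontinuous families, so convergence
on the dense range of `σ` propagates to all of `A`. On that range, `σ(a)·π(m_i) → σ(a)`
follows from `π(m_i)·σ(a) → σ(a)` because `π` is a bimodule map: this holds on elementary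
tensors, hence everywhere by the uniqueness in the universal property of `A ⊗̂ A`.
-/

universe u

open Filter Topology

theorem ContinuousLinearMap.tendsto_apply_of_denseRange {𝕜 A F G ι β : Type*}
    [NontriviallyNormedField 𝕜] [NormedAddCommGroup A] [NormedSpace 𝕜 A]
    [NormedAddCommGroup F] [NormedSpace 𝕜 F] [NormedAddCommGroup G] [NormedSpace 𝕜 G]
    (T : A →L[𝕜] F →L[𝕜] G) {m : ι → F} {C : ℝ} (hm : ∀ i, ‖m i‖ ≤ C) {L : Filter ι}
    {φ : A → G} (hφ : Continuous φ) {f : β → A} (hf : DenseRange f)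
    (h : ∀ b, Tendsto (fun i => T (f b) (m i)) L (𝓝 (φ (f b)))) (a : A) :
    Tendsto (fun i => T a (m i)) L (𝓝 (φ a)) := by
  have hbound : ∀ i, ‖T.flip (m i)‖ ≤ ‖T‖ * C := fun i =>
    calc ‖T.flip (m i)‖ ≤ ‖T.flip‖ * ‖m i‖ := T.flip.le_opNorm _
      _ ≤ ‖T‖ * C := by rw [opNorm_flip]; gcongr; exact hm i
  have hequi : Equicontinuous fun i => ⇑(T.flip (m i)) := by
    have := (NormedSpace.equicontinuous_TFAE fun i => T.flip (m i)).out 5 1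
    exact this.mp ⟨‖T‖ * C, hbound⟩
  exact hf.induction_on a (hequi.isClosed_setOfPred_tendsto hφ) h

def HasUniqueIsometricLift {𝕜 A : Type*} {E : Type u} [RCLike 𝕜] [NormedAddCommGroup A]
    [NormedSpace 𝕜 A] [NormedAddCommGroup E] [NormedSpace 𝕜 E]
    (tm : A →L[𝕜] A →L[𝕜] E) : Prop :=
  ∀ (X : Type u) [NormedAddCommGroup X] [NormedSpace 𝕜 X] [CompleteSpace X]
    (f : A →L[𝕜] A →L[𝕜] X), ∃! g : E →L[𝕜] X, (∀ a b, g (tm a b) = f a b) ∧ ‖g‖ = ‖f‖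

theorem HasUniqueIsometricLift.ext {𝕜 A : Type*} {E X : Type u} [RCLike 𝕜]
    [NormedAddCommGroup A] [NormedSpace 𝕜 A] [NormedAddCommGroup E] [NormedSpace 𝕜 E]
    [CompleteSpace E] [NormedAddCommGroup X] [NormedSpace 𝕜 X] [CompleteSpace X]
    {tm : A →L[𝕜] A →L[𝕜] E} (huniv : HasUniqueIsometricLift tm) (htm : tm ≠ 0)
    {g₁ g₂ : E →L[𝕜] X} (h : ∀ a b, g₁ (tm a b) = g₂ (tm a b)) : g₁ = g₂ := by
  rw [← sub_eq_zero]
  set g := g₁ - g₂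
  have hg : ∀ a b, g (tm a b) = 0 := fun a b => by simp [g, h]
  by_contra hg0
  obtain ⟨k, ⟨hk, hk_norm⟩, -⟩ := huniv E tm
  let F : A →L[𝕜] A →L[𝕜] E × X := (ContinuousLinearMap.compL 𝕜 A E (E × X)
    (ContinuousLinearMap.inl 𝕜 E X)).comp tm
  have hF_norm : ‖F‖ = ‖tm‖ :=
    ContinuousLinearMap.opNorm_ext _ _ fun a =>
      ContinuousLinearMap.opNorm_ext _ _ fun b => by simp [F]
  -- Every `k.prod h` with `h` vanishing on tensors and `‖h‖ ≤ ‖tm‖` is an isometric lift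
  -- of `F = (tm, 0)`, so all of them coincide.
  obtain ⟨K, -, hK⟩ := huniv (E × X) F
  have lift_eq : ∀ h : E →L[𝕜] X, (∀ a b, h (tm a b) = 0) → ‖h‖ ≤ ‖tm‖ → k.prod h = K :=
    fun h hh hh_norm => hK _ ⟨fun a b => by simp [F, hk, hh],
      by rw [ContinuousLinearMap.opNorm_prod, Prod.norm_def, hk_norm, hF_norm,
        max_eq_left hh_norm]⟩
  set t : 𝕜 := ((‖tm‖ / ‖g‖ : ℝ) : 𝕜)
  have ht : t ≠ 0 := by
    simp [t, mt (ContinuousLinearMap.opNorm_zero_iff tm).mp htm, hg0]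
  have htg_norm : ‖t • g‖ = ‖tm‖ := by
    rw [norm_smul, RCLike.norm_ofReal, abs_of_nonneg (by positivity),
      div_mul_cancel₀ _ (norm_ne_zero_iff.mpr hg0)]
  have hprod : k.prod 0 = k.prod (t • g) :=
    (lift_eq 0 (by simp) (norm_zero.trans_le tm.opNorm_nonneg)).trans
      (lift_eq (t • g) (fun a b => by simp [hg]) htg_norm.le).symm
  have htg : t • g = 0 := by
    simpa using congrArg ((ContinuousLinearMap.snd 𝕜 E X).comp ·) hprod.symm
  exact hg0 ((smul_eq_zero.mp htg).resolve_left ht)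

theorem HasUniqueIsometricLift.ext_of_norm_tmul {𝕜 : Type*} {A E : Type u} [RCLike 𝕜]
    [NormedAddCommGroup A] [NormedSpace 𝕜 A] [CompleteSpace A] [NormedAddCommGroup E]
    [NormedSpace 𝕜 E] [CompleteSpace E] {tm : A →L[𝕜] A →L[𝕜] E}
    (huniv : HasUniqueIsometricLift tm) (htm_norm : ∀ a b, ‖tm a b‖ = ‖a‖ * ‖b‖)
    {g₁ g₂ : E →L[𝕜] A} (h : ∀ a b, g₁ (tm a b) = g₂ (tm a b)) : g₁ = g₂ := by
  rcases subsingleton_or_nontrivial A with hA | hA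
  · exact Subsingleton.elim _ _
  obtain ⟨a, ha⟩ := exists_ne (0 : A)
  refine huniv.ext (fun h0 => ha ?_) h
  simpa [h0] using htm_norm a a

theorem sigma_approx_diagonal_implies_approx_diagonal
    -- A is a Banach algebra
    (A : Type u) [NonUnitalNormedRing A] [NormedSpace ℂ A]
    [IsScalarTower ℂ A A] [SMulCommClass ℂ A A] [CompleteSpace A]
    -- σ is a continuous algebra homomorphism on A with dense range
    (σ : A →L[ℂ] A)
    (hdense : DenseRange ⇑σ)
    -- E is the projective tensor product A ⊗̂ A
    (E : Type u) [NormedAddCommGroup E] [NormedSpace ℂ E] [CompleteSpace E]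
    (tm : A →L[ℂ] A →L[ℂ] E)
    (htm_norm : ∀ a b : A, ‖tm a b‖ = ‖a‖ * ‖b‖)
    (htm_univ : ∀ (X : Type u) [NormedAddCommGroup X] [NormedSpace ℂ X]
      [CompleteSpace X] (f : A →L[ℂ] A →L[ℂ] X),
      ∃! g : E →L[ℂ] X, (∀ a b : A, g (tm a b) = f a b) ∧ ‖g‖ = ‖f‖)
    -- the A-bimodule actions on E
    (l r : A →L[ℂ] E →L[ℂ] E)
    (hl : ∀ a b c : A, l a (tm b c) = tm (a * b) c)
    (hr : ∀ a b c : A, r a (tm b c) = tm b (c * a))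
    -- the diagonal map π
    (pr : E →L[ℂ] A)
    (hpr : ∀ a b : A, pr (tm a b) = a * b)
    -- A has a σ-approximate diagonal
    (had : ∃ (ι : Type u) (pι : Preorder ι),
      Nonempty ι ∧ IsDirected ι (fun i j => pι.le i j) ∧
      ∃ (m : ι → E) (C : ℝ),
        (∀ i, ‖m i‖ ≤ C) ∧
        ∀ a : A,
          Tendsto (fun i => r (σ a) (m i) - l (σ a) (m i))
            (@Filter.atTop ι pι) (nhds 0) ∧
          Tendsto (fun i => pr (m i) * σ a) (@Filter.atTop ι pι)
            (nhds (σ a))) :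
    -- Then A has an approximate diagonal
    ∃ (ι : Type u) (pι : Preorder ι),
      Nonempty ι ∧ IsDirected ι (fun i j => pι.le i j) ∧
      ∃ (m : ι → E) (C : ℝ),
        (∀ i, ‖m i‖ ≤ C) ∧
        ∀ a : A,
          Tendsto (fun i => l a (m i) - r a (m i))
            (@Filter.atTop ι pι) (nhds 0) ∧
          Tendsto (fun i => a * pr (m i)) (@Filter.atTop ι pι) (nhds a) := by
  obtain ⟨ι, pι, hne, hdir, m, C, hC, hm⟩ := had
  have pr_l : ∀ a x, pr (l a x) = a * pr x := fun a =>
    DFunLike.congr_fun (HasUniqueIsometricLift.ext_of_norm_tmul htm_univ htm_norm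
      (g₁ := pr.comp (l a)) (g₂ := (ContinuousLinearMap.mul ℂ A a).comp pr)
      fun b c => by simp [hl, hpr, mul_assoc])
  have pr_r : ∀ a x, pr (r a x) = pr x * a := fun a =>
    DFunLike.congr_fun (HasUniqueIsometricLift.ext_of_norm_tmul htm_univ htm_norm
      (g₁ := pr.comp (r a)) (g₂ := ((ContinuousLinearMap.mul ℂ A).flip a).comp pr)
      fun b c => by simp [hr, hpr, mul_assoc])
  refine ⟨ι, pι, hne, hdir, m, C, hC, fun a => ⟨?_, ?_⟩⟩
  · refine (l - r).tendsto_apply_of_denseRange hC continuous_const hdense (fun b => ?_) a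
    simpa using (hm b).1.neg
  · refine ((ContinuousLinearMap.mul ℂ A).bilinearComp (.id ℂ A) pr).tendsto_apply_of_denseRange
      hC continuous_id hdense (fun b => ?_) a
    have hcomm : Tendsto (fun i => pr (m i) * σ b - σ b * pr (m i)) atTop (𝓝 0) := by
      simpa [Function.comp_def, pr_l, pr_r] using (pr.continuous.tendsto 0).comp (hm b).1
    simpa using (hm b).2.sub hcomm
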